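/- Let x and y be two generators of an n×n grid that agree at n−2 points and differ at the four corners of an embedded rectangle r in the planar grid. Then for the Alexander grading A(x) = Σ_{p∈O∪X} J(x,p)·w(p)·ε(p) (with ε = +1 on X-markings and −1 on O-markings, and weights w(p) in an abelian group H), one has A(x) − A(y) = Σ_{p∈X∩r} w(p) − Σ_{p∈O∩r} w(p). -/

import Mathlib

/-!
Generators are modelled by permutations, the O's by a permutation ρ (the O in column i
is at (i+1/2, ρ i+1/2)), the X's by a finite set of squares `Xset` at half-integer
coordinates.  Since J takes half-integer values, H is taken to be a ℚ-module so that
the Alexander grading is defined (a priori it lives in ½H).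
-/

noncomputable section
open Finset

attribute [local instance] Classical.propDecidable

def Ic (A B : Finset (ℝ × ℝ)) : ℕ :=
  ((A ×ˢ B).filter fun p => p.1.1 < p.2.1 ∧ p.1.2 < p.2.2).card

def Jc (A B : Finset (ℝ × ℝ)) : ℚ := ((Ic A B : ℚ) + (Ic B A : ℚ)) / 2

def genPts {n : ℕ} (σ : Equiv.Perm (Fin n)) : Finset (ℝ × ℝ) :=
  Finset.univ.image fun i : Fin n => ((i.val : ℝ), ((σ i).val : ℝ))

/-- The point at the centre of the square `q`. -/
def markPt {n : ℕ} (q : Fin n × Fin n) : ℝ × ℝ :=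
  ((q.1.val : ℝ) + 1/2, (q.2.val : ℝ) + 1/2)

/-- The Alexander grading `A(x) = Σ_{p ∈ O∪X} J(x,p)·w(p)·ε(p)`. -/
def Alex {n : ℕ} {H : Type*} [AddCommGroup H] [Module ℚ H]
    (σ ρ : Equiv.Perm (Fin n)) (Xset : Finset (Fin n × Fin n))
    (wX : Fin n × Fin n → H) (wO : Fin n → H) : H :=
  (∑ q ∈ Xset, Jc (genPts σ) {markPt q} • wX q) -
    ∑ i : Fin n, Jc (genPts σ) {markPt (i, ρ i)} • wO i

/-!
For a single marking `o`, `2 J(x, o)` counts the points of `x` lying south-west or north-east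
of `o`, i.e. on the same side of `o` horizontally as vertically. Passing from `x` to `y` moves
only the two points in columns `c₁, c₂`, and a case check at the four corners shows that this
count drops by `2` when `o` lies in `r` and is unchanged otherwise. Summing against the signed
weights gives the formula.
-/

lemma Ic_singleton_right (A : Finset (ℝ × ℝ)) (p : ℝ × ℝ) :
    Ic A {p} = #{a ∈ A | a.1 < p.1 ∧ a.2 < p.2} := by
  rw [Ic, product_singleton, filter_map, card_map]
  rfl

lemma Ic_singleton_left (B : Finset (ℝ × ℝ)) (p : ℝ × ℝ) :
    Ic {p} B = #{b ∈ B | p.1 < b.1 ∧ p.2 < b.2} := by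
  rw [Ic, singleton_product, filter_map, card_map]
  rfl

lemma card_filter_genPts {n : ℕ} (σ : Equiv.Perm (Fin n)) (P : ℝ × ℝ → Prop)
    [DecidablePred P] :
    #{x ∈ genPts σ | P x} = #{i : Fin n | P (((i : ℕ) : ℝ), ((σ i : ℕ) : ℝ))} := by
  rw [genPts, filter_image, card_image_of_injective]
  intro i j hij
  exact Fin.ext (Nat.cast_injective (R := ℝ) (congrArg Prod.fst hij))

lemma natCast_lt_natCast_add_half {i m : ℕ} : (i : ℝ) < m + 1 / 2 ↔ i ≤ m := by
  constructor
  · intro h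
    by_contra! hmi
    have : (m : ℝ) + 1 ≤ i := by exact_mod_cast hmi
    linarith
  · intro h
    have : (i : ℝ) ≤ m := by exact_mod_cast h
    linarith

lemma natCast_add_half_lt_natCast {i m : ℕ} : (m : ℝ) + 1 / 2 < i ↔ m < i := by
  constructor
  · intro h
    by_contra! him
    have : (i : ℝ) ≤ m := by exact_mod_cast him
    linarith
  · intro h
    have : (m : ℝ) + 1 ≤ i := by exact_mod_cast h
    linarith

lemma two_mul_Jc_genPts_markPt {n : ℕ} (σ : Equiv.Perm (Fin n)) (q : Fin n × Fin n) :
    2 * Jc (genPts σ) {markPt q} = ∑ i, if i ≤ q.1 ↔ σ i ≤ q.2 then (1 : ℚ) else 0 := by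
  rw [Jc, Ic_singleton_right, Ic_singleton_left, card_filter_genPts, card_filter_genPts,
    card_filter, card_filter, mul_div_cancel₀ _ two_ne_zero]
  simp only [markPt, natCast_lt_natCast_add_half, natCast_add_half_lt_natCast, Fin.val_fin_le,
    Fin.val_fin_lt, Nat.cast_sum, Nat.cast_ite, Nat.cast_one, Nat.cast_zero, ← sum_add_distrib]
  refine sum_congr rfl fun i _ => ?_
  by_cases h₁ : i ≤ q.1 <;> by_cases h₂ : σ i ≤ q.2 <;> simp [h₁, h₂]

lemma Equiv.Perm.sum_apply_sub_sum_mul_swap {α M : Type*} [Fintype α] [DecidableEq α]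
    [AddCommGroup M] (f : α → α → M) (σ : Equiv.Perm α) {a b : α} (hab : a ≠ b) :
    ∑ i, f i (σ i) - ∑ i, f i ((σ * Equiv.swap a b) i) =
      f a (σ a) + f b (σ b) - f a (σ b) - f b (σ a) := by
  rw [← sum_sub_distrib, Fintype.sum_eq_add a b hab]
  · simp only [Equiv.Perm.mul_apply, Equiv.swap_apply_left, Equiv.swap_apply_right]
    abel
  · rintro i ⟨hia, hib⟩
    simp only [Equiv.Perm.mul_apply, Equiv.swap_apply_of_ne_of_ne hia hib, sub_self]

/-- With `P, Q` saying that a square lies right of columns `c₁ < c₂` and `R, S` that it lies above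
rows `σ c₁ < σ c₂`, the left side is the change of `2 J` at the four corners of the rectangle. -/
lemma boole_iff_corners {K : Type*} [Ring K] (P Q R S : Prop) [Decidable P] [Decidable Q]
    [Decidable R] [Decidable S] (hQP : Q → P) (hSR : S → R) :
    ((if P ↔ R then 1 else 0) + (if Q ↔ S then 1 else 0) - (if P ↔ S then 1 else 0) -
      (if Q ↔ R then 1 else 0) : K) = 2 * if P ∧ ¬Q ∧ R ∧ ¬S then 1 else 0 := by
  by_cases P <;> by_cases Q <;> by_cases R <;> by_cases S <;> simp_all [← one_add_one_eq_two]

lemma Jc_genPts_sub_Jc_genPts_mul_swap {n : ℕ} (σ : Equiv.Perm (Fin n)) {c₁ c₂ : Fin n}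
    (hc : c₁ < c₂) (hr : σ c₁ < σ c₂) (q : Fin n × Fin n) :
    Jc (genPts σ) {markPt q} - Jc (genPts (σ * Equiv.swap c₁ c₂)) {markPt q} =
      if c₁ ≤ q.1 ∧ q.1 < c₂ ∧ σ c₁ ≤ q.2 ∧ q.2 < σ c₂ then 1 else 0 := by
  refine mul_left_cancel₀ two_ne_zero ?_
  rw [mul_sub, two_mul_Jc_genPts_markPt, two_mul_Jc_genPts_markPt,
    Equiv.Perm.sum_apply_sub_sum_mul_swap (fun i j => if i ≤ q.1 ↔ j ≤ q.2 then (1 : ℚ) else 0)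
      σ hc.ne]
  simp only [← not_le]
  exact boole_iff_corners _ _ _ _ hc.le.trans hr.le.trans

theorem stmt2 {n : ℕ} {H : Type*} [AddCommGroup H] [Module ℚ H]
    (σ τ ρ : Equiv.Perm (Fin n)) (Xset : Finset (Fin n × Fin n))
    (wX : Fin n × Fin n → H) (wO : Fin n → H)
    (c₁ c₂ : Fin n)
    -- r is the rectangle with corners (c₁, σ c₁), (c₂, σ c₂) (on x, lower-left and
    -- upper-right) and (c₁, σ c₂), (c₂, σ c₁) (on y); x and y agree elsewhere:
    (hc : c₁ < c₂) (hr : σ c₁ < σ c₂)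
    (hτ : τ = σ * Equiv.swap c₁ c₂) :
    Alex σ ρ Xset wX wO - Alex τ ρ Xset wX wO =
      (∑ q ∈ Xset.filter (fun q => c₁ ≤ q.1 ∧ q.1 < c₂ ∧ σ c₁ ≤ q.2 ∧ q.2 < σ c₂), wX q)
        - ∑ i ∈ Finset.univ.filter
            (fun i : Fin n => c₁ ≤ i ∧ i < c₂ ∧ σ c₁ ≤ ρ i ∧ ρ i < σ c₂), wO i := by
  subst hτ
  rw [Alex, Alex, sub_sub_sub_comm, ← sum_sub_distrib, ← sum_sub_distrib, sum_filter, sum_filter]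
  simp only [← sub_smul, Jc_genPts_sub_Jc_genPts_mul_swap σ hc hr, ite_smul, one_smul, zero_smul]
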